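/- arXiv:2203.08997 — 4 statements merged into one kernel-verified Lean document; each statement's English description precedes it below -/
import Mathlib

section
/- There exists a constant C > 0 such that for all positive integers ℓ, ℓ', l̄ satisfying the triangle inequalities ℓ ≤ ℓ' + l̄, ℓ' ≤ ℓ + l̄, l̄ ≤ ℓ + ℓ' and such that L := ℓ + ℓ' + l̄ is odd, it holds |P(ℓ, ℓ', l̄)| ≤ C · min{ √ℓ·√ℓ', √ℓ·√l̄, √ℓ'·√l̄ }. -/
/-- `Δ(ℓ, ℓ', l̄) := sqrt((ℓ+ℓ'-l̄)! (ℓ-ℓ'+l̄)! (-ℓ+ℓ'+l̄)! / (ℓ+ℓ'+l̄+1)!)`. -/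
noncomputable def Δ (l l' lb : ℕ) : ℝ :=
  Real.sqrt (((l + l' - lb).factorial * (l + lb - l').factorial * (l' + lb - l).factorial : ℝ)
    / ((l + l' + lb + 1).factorial : ℝ))

/-- The factor `P(ℓ, ℓ', l̄)` appearing in the explicit formula for the structure constants
of the spherical harmonics with respect to the Poisson bracket on the sphere (for
`L := ℓ+ℓ'+l̄` odd). -/
noncomputable def P (l l' lb : ℕ) : ℝ :=
  (-1 : ℝ) ^ ((l + l' - lb + 1) / 2) * Δ l l' lb * ((l + l' + lb : ℝ) + 1) *
    (((l + l' + lb - 1) / 2).factorial : ℝ) /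
      ((((l' + lb - l - 1) / 2).factorial : ℝ) * (((l + lb - l' - 1) / 2).factorial : ℝ) *
        (((l + l' - lb - 1) / 2).factorial : ℝ))

/-!
Write `ℓ = b + c + 1`, `ℓ' = a + c + 1`, `l̄ = a + b + 1` and `k = a + b + c + 1`, so that
`L = 2k + 1`. With `o n := (2n+1)!/(n!)² = (2n+1) · C(2n, n)` the definition collapses to
`P² = o a · o b · o c · (2k + 2) / o k`. The Wallis-type bounds
`16ⁿ / (4n) ≤ C(2n, n)² ≤ 16ⁿ / (2n + 1)` then give
`P⁴ ≤ (2a + 1)(2b + 1)(2c + 1)(2k + 1)`, which by Heron's formula is `16 · area²` of the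
triangle with sides `ℓ, ℓ', l̄`; since the area is at most half the product of any two sides,
`P⁴ ≤ 4 (x y)²` for every pair of sides `x, y`.
-/

open Nat

namespace Nat

theorem centralBinom_sq_mul_le (n : ℕ) : centralBinom n ^ 2 * (2 * n + 1) ≤ 16 ^ n := by
  induction n with
  | zero => simp
  | succ n ih =>
    refine Nat.le_of_mul_le_mul_left ?_ (show 0 < (n + 1) ^ 2 by positivity)
    calc (n + 1) ^ 2 * (centralBinom (n + 1) ^ 2 * (2 * (n + 1) + 1))
        = ((n + 1) * centralBinom (n + 1)) ^ 2 * (2 * n + 3) := by ring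
      _ = 4 * (2 * n + 1) * (2 * n + 3) * (centralBinom n ^ 2 * (2 * n + 1)) := by
        rw [succ_mul_centralBinom_succ]; ring
      _ ≤ 4 * (2 * n + 1) * (2 * n + 3) * 16 ^ n := by gcongr
      _ ≤ 16 * (n + 1) ^ 2 * 16 ^ n := Nat.mul_le_mul_right _ (by nlinarith)
      _ = (n + 1) ^ 2 * 16 ^ (n + 1) := by ring

theorem sixteen_pow_le_mul_centralBinom_sq {n : ℕ} (hn : 0 < n) :
    16 ^ n ≤ 4 * n * centralBinom n ^ 2 := by
  induction n, hn using Nat.le_induction with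
  | base => decide
  | succ n hn ih =>
    refine Nat.le_of_mul_le_mul_left ?_ (show 0 < (n + 1) ^ 2 by positivity)
    calc (n + 1) ^ 2 * 16 ^ (n + 1)
        = 16 * (n + 1) ^ 2 * 16 ^ n := by ring
      _ ≤ 16 * (n + 1) ^ 2 * (4 * n * centralBinom n ^ 2) := by gcongr
      _ = 16 * n * (n + 1) * (4 * (n + 1) * centralBinom n ^ 2) := by ring
      _ ≤ 4 * (2 * n + 1) ^ 2 * (4 * (n + 1) * centralBinom n ^ 2) :=
        Nat.mul_le_mul_right _ (by nlinarith)
      _ = 4 * (n + 1) * (2 * (2 * n + 1) * centralBinom n) ^ 2 := by ring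
      _ = 4 * (n + 1) * ((n + 1) * centralBinom (n + 1)) ^ 2 := by rw [succ_mul_centralBinom_succ]
      _ = (n + 1) ^ 2 * (4 * (n + 1) * centralBinom (n + 1) ^ 2) := by ring

theorem factorial_two_mul_add_one (n : ℕ) :
    (2 * n + 1)! = (2 * n + 1) * centralBinom n * n ! * n ! := by
  have h := choose_mul_factorial_mul_factorial (show n ≤ 2 * n by omega)
  rw [show 2 * n - n = n by omega, ← centralBinom_eq_two_mul_choose] at h
  rw [factorial_succ, ← h]
  ring

theorem sq_mul_centralBinom_le (n : ℕ) :
    ((2 * n + 1) * centralBinom n) ^ 2 ≤ (2 * n + 1) * 16 ^ n :=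
  calc ((2 * n + 1) * centralBinom n) ^ 2 = (2 * n + 1) * (centralBinom n ^ 2 * (2 * n + 1)) := by
        ring
    _ ≤ (2 * n + 1) * 16 ^ n := Nat.mul_le_mul_left _ (centralBinom_sq_mul_le n)

theorem sq_prod_mul_centralBinom_le (a b c : ℕ) :
    ((2 * a + 1) * centralBinom a * ((2 * b + 1) * centralBinom b) *
        ((2 * c + 1) * centralBinom c) * (2 * (a + b + c + 1) + 2)) ^ 2 ≤
      (2 * a + 1) * (2 * b + 1) * (2 * c + 1) * (2 * (a + b + c + 1) + 1) *
        ((2 * (a + b + c + 1) + 1) * centralBinom (a + b + c + 1)) ^ 2 := by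
  set k := a + b + c + 1 with hk
  refine Nat.le_of_mul_le_mul_left ?_ (show 0 < 4 * k by omega)
  calc 4 * k * ((2 * a + 1) * centralBinom a * ((2 * b + 1) * centralBinom b) *
        ((2 * c + 1) * centralBinom c) * (2 * k + 2)) ^ 2
      = ((2 * a + 1) * centralBinom a) ^ 2 * ((2 * b + 1) * centralBinom b) ^ 2 *
          ((2 * c + 1) * centralBinom c) ^ 2 * ((2 * k + 2) ^ 2 * (4 * k)) := by ring
    _ ≤ (2 * a + 1) * 16 ^ a * ((2 * b + 1) * 16 ^ b) * ((2 * c + 1) * 16 ^ c) *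
          (16 * (2 * k + 1) ^ 3) := by
        gcongr ?_ * ?_ * ?_ * ?_
        · exact sq_mul_centralBinom_le a
        · exact sq_mul_centralBinom_le b
        · exact sq_mul_centralBinom_le c
        · nlinarith
    _ = (2 * a + 1) * (2 * b + 1) * (2 * c + 1) * (2 * k + 1) ^ 3 * 16 ^ k := by
        rw [hk, pow_succ, pow_add, pow_add]; ring
    _ ≤ (2 * a + 1) * (2 * b + 1) * (2 * c + 1) * (2 * k + 1) ^ 3 *
          (4 * k * centralBinom k ^ 2) :=
        Nat.mul_le_mul_left _ (sixteen_pow_le_mul_centralBinom_sq (by omega))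
    _ = 4 * k * ((2 * a + 1) * (2 * b + 1) * (2 * c + 1) * (2 * k + 1) *
          ((2 * k + 1) * centralBinom k) ^ 2) := by ring

end Nat

theorem P_sq_eq (a b c : ℕ) :
    P (b + c + 1) (a + c + 1) (a + b + 1) ^ 2 =
      ((2 * a + 1) * centralBinom a * ((2 * b + 1) * centralBinom b) *
          ((2 * c + 1) * centralBinom c) * (2 * (a + b + c + 1) + 2) : ℕ) /
        ((2 * (a + b + c + 1) + 1) * centralBinom (a + b + c + 1) : ℕ) := by
  set k := a + b + c + 1 with hk
  rw [P, Δ, show b + c + 1 + (a + c + 1) - (a + b + 1) = 2 * c + 1 by omega,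
    show b + c + 1 + (a + b + 1) - (a + c + 1) = 2 * b + 1 by omega,
    show a + c + 1 + (a + b + 1) - (b + c + 1) = 2 * a + 1 by omega,
    show b + c + 1 + (a + c + 1) + (a + b + 1) + 1 = (2 * k + 1) + 1 by omega,
    show (2 * c + 1 + 1) / 2 = c + 1 by omega,
    show (b + c + 1 + (a + c + 1) + (a + b + 1) - 1) / 2 = k by omega,
    show (2 * a + 1 - 1) / 2 = a by omega, show (2 * b + 1 - 1) / 2 = b by omega,
    show (2 * c + 1 - 1) / 2 = c by omega, factorial_succ (2 * k + 1),
    factorial_two_mul_add_one a, factorial_two_mul_add_one b, factorial_two_mul_add_one c,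
    factorial_two_mul_add_one k]
  rw [div_pow, mul_pow, mul_pow, mul_pow, Real.sq_sqrt (by positivity), ← pow_mul,
    pow_mul', neg_one_sq, one_pow, one_mul]
  push_cast
  field_simp
  rw [hk]
  push_cast
  ring

theorem P_pow_four_le (a b c : ℕ) :
    P (b + c + 1) (a + c + 1) (a + b + 1) ^ 4 ≤
      (2 * a + 1) * (2 * b + 1) * (2 * c + 1) * (2 * (a + b + c + 1) + 1 : ℝ) := by
  have hpos : 0 < (2 * (a + b + c + 1) + 1) * centralBinom (a + b + c + 1) :=
    Nat.mul_pos (by omega) (centralBinom_pos _)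
  rw [show 4 = 2 * 2 by rfl, pow_mul, P_sq_eq, div_pow, div_le_iff₀ (by positivity)]
  exact_mod_cast sq_prod_mul_centralBinom_le a b c

theorem heron_le (x y z : ℝ) :
    (x + y + z) * (-x + y + z) * (x - y + z) * (x + y - z) ≤ 4 * (x * y) ^ 2 := by
  have heron : (x + y + z) * (-x + y + z) * (x - y + z) * (x + y - z) =
      4 * (x * y) ^ 2 - (x ^ 2 + y ^ 2 - z ^ 2) ^ 2 := by ring
  linarith [sq_nonneg (x ^ 2 + y ^ 2 - z ^ 2)]

theorem abs_le_sqrt_two_mul_of_pow_four_le {p x y : ℝ} (hx : 0 ≤ x) (hy : 0 ≤ y)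
    (h : p ^ 4 ≤ 4 * (x * y) ^ 2) : |p| ≤ √2 * (√x * √y) := by
  have hp : p ^ 2 ≤ 2 * x * y := by
    refine (pow_le_pow_iff_left₀ (sq_nonneg p) (by positivity) two_ne_zero).mp ?_
    linarith
  calc |p| ≤ √(2 * x * y) := Real.abs_le_sqrt hp
    _ = √2 * (√x * √y) := by
      rw [Real.sqrt_mul (by positivity), Real.sqrt_mul zero_le_two, mul_assoc]

theorem exists_eq_of_triangle {l l' lb : ℕ} (h₁ : l ≤ l' + lb) (h₂ : l' ≤ l + lb)
    (h₃ : lb ≤ l + l') (hodd : Odd (l + l' + lb)) :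
    ∃ a b c : ℕ, l = b + c + 1 ∧ l' = a + c + 1 ∧ lb = a + b + 1 := by
  obtain ⟨m, hm⟩ := hodd
  exact ⟨m - l, m - l', m - lb, by omega, by omega, by omega⟩

/-- There is a constant `C > 0` such that for all positive integers `ℓ, ℓ', l̄` satisfying
the triangle inequalities with `L := ℓ+ℓ'+l̄` odd,
`|P(ℓ, ℓ', l̄)| ≤ C · min{√ℓ√ℓ', √ℓ√l̄, √ℓ'√l̄}`. -/
theorem P_bound : ∃ C : ℝ, 0 < C ∧ ∀ l l' lb : ℕ, 0 < l → 0 < l' → 0 < lb →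
    l ≤ l' + lb → l' ≤ l + lb → lb ≤ l + l' → Odd (l + l' + lb) →
    |P l l' lb| ≤ C * min (Real.sqrt l * Real.sqrt l')
      (min (Real.sqrt l * Real.sqrt lb) (Real.sqrt l' * Real.sqrt lb)) := by
  refine ⟨√2, by positivity, fun l l' lb _ _ _ h₁ h₂ h₃ hodd => ?_⟩
  obtain ⟨a, b, c, rfl, rfl, rfl⟩ := exists_eq_of_triangle h₁ h₂ h₃ hodd
  have hP := P_pow_four_le a b c
  rw [mul_min_of_nonneg _ _ (by positivity), mul_min_of_nonneg _ _ (by positivity)]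
  refine le_min ?_ (le_min ?_ ?_) <;> refine abs_le_sqrt_two_mul_of_pow_four_le
    (Nat.cast_nonneg _) (Nat.cast_nonneg _) ?_ <;> push_cast
  · linarith [heron_le (b + c + 1 : ℝ) (a + c + 1) (a + b + 1)]
  · linarith [heron_le (b + c + 1 : ℝ) (a + b + 1) (a + c + 1)]
  · linarith [heron_le (a + c + 1 : ℝ) (a + b + 1) (b + c + 1)]
end

section
/- There exists a constant C > 0 such that for all positive integers l̄, ℓ, ℓ' with ℓ ≥ 2·l̄·(log(l̄) + 1) (natural logarithm) and |l̄ - ℓ| + 1 ≤ ℓ' ≤ l̄ + ℓ, it holds ( 1/(ℓ(ℓ+1)) - 1/(ℓ'(ℓ'+1)) )² ≤ C · (ℓ²·l̄² + l̄⁴) / (ℓ⁴·(ℓ+1)⁴). -/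
/-!
Since `log l̄ ≥ 0`, the hypothesis gives `ℓ ≥ 2 l̄`, so `|ℓ' - ℓ| ≤ l̄` forces `ℓ' ≥ ℓ / 2`.
The difference of inverse eigenvalues is `(ℓ' - ℓ)(ℓ' + ℓ + 1) / (ℓ(ℓ+1) ℓ'(ℓ'+1))`: its numerator
is `O(l̄ ℓ)` and its denominator is of order `ℓ⁴`, so the difference is `O(l̄ / ℓ³)`.
-/

lemma two_mul_le_of_two_mul_mul_log_add_one_le {a b : ℝ} (hb : 1 ≤ b)
    (h : 2 * b * (Real.log b + 1) ≤ a) : 2 * b ≤ a := by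
  nlinarith [Real.log_nonneg hb]

lemma abs_one_div_mul_add_one_sub_le {a b c : ℝ} (ha : 0 < a) (hab : 2 * b ≤ a)
    (hca : |c - a| ≤ b) :
    |1 / (a * (a + 1)) - 1 / (c * (c + 1))| ≤ 10 * b / (a ^ 2 * (a + 1)) := by
  obtain ⟨hca₁, hca₂⟩ := abs_le.mp hca
  have hc : a / 2 ≤ c := by linarith
  have hc₀ : 0 < c := by linarith
  have hb : 0 ≤ b := le_trans (abs_nonneg _) hca
  have hdiff : 1 / (a * (a + 1)) - 1 / (c * (c + 1)) =
      (c - a) * (c + a + 1) / (a * (a + 1) * (c * (c + 1))) := by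
    field_simp
    ring
  have hnum : |c - a| * (c + a + 1) ≤ b * (5 / 2 * (a + 2)) := by
    gcongr
    linarith
  have hden : a * (a + 2) / 4 ≤ c * (c + 1) := by nlinarith
  rw [hdiff, abs_div, abs_mul, abs_of_pos (by linarith : 0 < c + a + 1),
    abs_of_pos (by positivity : 0 < a * (a + 1) * (c * (c + 1))),
    div_le_div_iff₀ (by positivity) (by positivity)]
  calc |c - a| * (c + a + 1) * (a ^ 2 * (a + 1))
      ≤ b * (5 / 2 * (a + 2)) * (a ^ 2 * (a + 1)) := by gcongr
    _ = 10 * b * (a * (a + 1) * (a * (a + 2) / 4)) := by ring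
    _ ≤ 10 * b * (a * (a + 1) * (c * (c + 1))) := by gcongr

lemma sq_one_div_mul_add_one_sub_le {a b c : ℝ} (ha : 1 ≤ a) (hab : 2 * b ≤ a)
    (hca : |c - a| ≤ b) :
    (1 / (a * (a + 1)) - 1 / (c * (c + 1))) ^ 2 ≤
      400 * (a ^ 2 * b ^ 2 + b ^ 4) / (a ^ 4 * (a + 1) ^ 4) := by
  have hgap := abs_one_div_mul_add_one_sub_le (by linarith) hab hca
  calc (1 / (a * (a + 1)) - 1 / (c * (c + 1))) ^ 2
      = |1 / (a * (a + 1)) - 1 / (c * (c + 1))| ^ 2 := (sq_abs _).symm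
    _ ≤ (10 * b / (a ^ 2 * (a + 1))) ^ 2 := pow_le_pow_left₀ (abs_nonneg _) hgap 2
    _ = 100 * b ^ 2 * (a + 1) ^ 2 / (a ^ 4 * (a + 1) ^ 4) := by
      field_simp
      ring
    _ ≤ 400 * (a ^ 2 * b ^ 2 + b ^ 4) / (a ^ 4 * (a + 1) ^ 4) := by
      refine div_le_div_of_nonneg_right ?_ (by positivity)
      have hsucc : (a + 1) ^ 2 ≤ 4 * a ^ 2 := by nlinarith
      nlinarith [mul_le_mul_of_nonneg_left hsucc (sq_nonneg b), pow_nonneg (sq_nonneg b) 2]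

/-- Eigenvalue-gap estimate in the regime `ℓ ≫ l̄`: there is `C > 0` such that for all
positive integers `l̄, ℓ, ℓ'` with `ℓ ≥ 2·l̄·(log(l̄)+1)` and `|l̄-ℓ|+1 ≤ ℓ' ≤ l̄+ℓ`,
`(1/(ℓ(ℓ+1)) - 1/(ℓ'(ℓ'+1)))² ≤ C·(ℓ²l̄² + l̄⁴)/(ℓ⁴(ℓ+1)⁴)`. -/
theorem eigenvalue_gap_estimate : ∃ C : ℝ, 0 < C ∧
    ∀ lb l l' : ℕ, 0 < lb → 0 < l → 0 < l' →
    2 * (lb : ℝ) * (Real.log lb + 1) ≤ (l : ℝ) →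
    |(lb : ℤ) - (l : ℤ)| + 1 ≤ (l' : ℤ) → (l' : ℤ) ≤ (lb : ℤ) + (l : ℤ) →
    (1 / ((l : ℝ) * ((l : ℝ) + 1)) - 1 / ((l' : ℝ) * ((l' : ℝ) + 1))) ^ 2 ≤
      C * ((l : ℝ) ^ 2 * (lb : ℝ) ^ 2 + (lb : ℝ) ^ 4) / ((l : ℝ) ^ 4 * ((l : ℝ) + 1) ^ 4) := by
  refine ⟨400, by norm_num, fun lb l l' hlb hl _ hlog hlower hupper => ?_⟩
  have hgap : |(l' : ℝ) - l| ≤ lb := by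
    have hint : |(l' : ℤ) - l| ≤ lb :=
      abs_le.mpr ⟨by linarith [neg_le_abs ((lb : ℤ) - l)], by linarith⟩
    exact_mod_cast hint
  exact sq_one_div_mul_add_one_sub_le (by exact_mod_cast hl)
    (two_mul_le_of_two_mul_mul_log_add_one_le (by exact_mod_cast hlb) hlog) hgap
end

section
/- Fix a real number κ > 5/2. Define for each integer N ≥ 2 the quantity A_N(κ) := (1/N⁴) · Σ_{l̄=1}^{N-1} (2l̄+1) · (l̄(l̄+1))^{-κ} · Σ_{ℓ} (2ℓ+1) · Σ_{ℓ'=|l̄-ℓ|+1}^{min(N, l̄+ℓ)} (ℓ⁸·l̄⁴ + ℓ⁶·l̄⁶) / (ℓ⁴·(ℓ+1)⁴), where the middle sum runs over integers ℓ with 2·l̄·(log(l̄)+1) ≤ ℓ ≤ N-1 (natural logarithm). Then A_N(κ) → 0 as N → ∞. -/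
/-!
For `ℓ ≥ 2l̄(log l̄ + 1)` one has `ℓ ≥ 2l̄`, so the summand is at most `2l̄⁴`, at most `2l̄` values
of `ℓ'` occur, `2ℓ + 1 ≤ 2N`, and at most `N` values of `ℓ` occur. Together with
`(2l̄ + 1)(l̄(l̄ + 1))^{-κ} ≤ 3l̄^{1-2κ}`, each `l̄`-term is at most `24N²l̄^{6-2κ} ≤ 24N^{2+a}` with
`a = max(6 - 2κ, 0)`, hence `A_N(κ) ≤ 24N^{a-1}`, and `a < 1` precisely because `κ > 5/2`.
-/

open Filter

/-- The triple sum `A_N(κ)` bounding the contribution of the regime `ℓ ≫ l̄`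
(i.e. `ℓ ≥ 2l̄(log l̄ + 1)`) to `E[‖r^N(0)‖²_{H^{-κ}}]`. -/
noncomputable def A (κ : ℝ) (N : ℕ) : ℝ :=
  (1 / (N : ℝ) ^ 4) *
    ∑ lb ∈ Finset.Icc 1 (N - 1),
      (2 * (lb : ℝ) + 1) * ((lb : ℝ) * ((lb : ℝ) + 1)) ^ (-κ) *
        ∑ l ∈ (Finset.Icc 1 (N - 1)).filter
            (fun l : ℕ => 2 * (lb : ℝ) * (Real.log lb + 1) ≤ (l : ℝ)),
          (2 * (l : ℝ) + 1) *
            ∑ _l' ∈ Finset.Icc (((lb : ℤ) - (l : ℤ)).natAbs + 1) (min N (lb + l)),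
              ((l : ℝ) ^ 8 * (lb : ℝ) ^ 4 + (l : ℝ) ^ 6 * (lb : ℝ) ^ 6) /
                ((l : ℝ) ^ 4 * ((l : ℝ) + 1) ^ 4)

open Finset

lemma A_nonneg (κ : ℝ) (N : ℕ) : 0 ≤ A κ N := by
  unfold A; positivity

lemma card_Icc_natAbs_sub_le (a b N : ℕ) :
    #(Icc (((a : ℤ) - b).natAbs + 1) (min N (a + b))) ≤ 2 * min a b := by
  rw [Nat.card_Icc]; omega

lemma ratio_le_two_mul_pow_four {x y : ℝ} (hy : 0 ≤ y) (hyx : 2 * y ≤ x) :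
    (x ^ 8 * y ^ 4 + x ^ 6 * y ^ 6) / (x ^ 4 * (x + 1) ^ 4) ≤ 2 * y ^ 4 := by
  have hx : 0 ≤ x := by linarith
  refine div_le_of_le_mul₀ (by positivity) (by positivity) ?_
  have hx8 : x ^ 8 ≤ x ^ 4 * (x + 1) ^ 4 := by
    rw [← mul_pow, show x ^ 8 = (x * x) ^ 4 by ring]
    gcongr; linarith
  have hy6 : x ^ 6 * y ^ 6 ≤ x ^ 8 * y ^ 4 := by
    have : y ^ 2 ≤ x ^ 2 := by gcongr; linarith
    calc x ^ 6 * y ^ 6 = x ^ 6 * y ^ 4 * y ^ 2 := by ring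
      _ ≤ x ^ 6 * y ^ 4 * x ^ 2 := by gcongr
      _ = x ^ 8 * y ^ 4 := by ring
  nlinarith [pow_nonneg hy 4]

lemma two_mul_le_of_log_cutoff {y x : ℝ} (hy : 1 ≤ y) (h : 2 * y * (Real.log y + 1) ≤ x) :
    2 * y ≤ x := by
  have := Real.log_nonneg hy
  nlinarith

lemma A_inner_sum_le {N lb l : ℕ} (hlb : 2 * (lb : ℝ) ≤ l) (hlN : l + 1 ≤ N) :
    (2 * (l : ℝ) + 1) *
        ∑ _l' ∈ Icc (((lb : ℤ) - (l : ℤ)).natAbs + 1) (min N (lb + l)),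
          ((l : ℝ) ^ 8 * (lb : ℝ) ^ 4 + (l : ℝ) ^ 6 * (lb : ℝ) ^ 6) /
            ((l : ℝ) ^ 4 * ((l : ℝ) + 1) ^ 4) ≤
      8 * N * (lb : ℝ) ^ 5 := by
  have hcard : (#(Icc (((lb : ℤ) - (l : ℤ)).natAbs + 1) (min N (lb + l))) : ℝ) ≤ 2 * lb := by
    exact_mod_cast (card_Icc_natAbs_sub_le lb l N).trans (by omega)
  have hl : 2 * (l : ℝ) + 1 ≤ 2 * N := by
    have : (l : ℝ) + 1 ≤ N := by exact_mod_cast hlN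
    linarith
  rw [sum_const, nsmul_eq_mul]
  calc (2 * (l : ℝ) + 1) * (_ * _)
      ≤ 2 * N * (2 * lb * (2 * (lb : ℝ) ^ 4)) := by
        gcongr
        exact ratio_le_two_mul_pow_four (Nat.cast_nonneg _) hlb
    _ = 8 * N * (lb : ℝ) ^ 5 := by ring

lemma A_middle_sum_le {N lb : ℕ} (hlb : 1 ≤ lb) :
    ∑ l ∈ (Icc 1 (N - 1)).filter (fun l : ℕ => 2 * (lb : ℝ) * (Real.log lb + 1) ≤ (l : ℝ)),
        (2 * (l : ℝ) + 1) *
          ∑ _l' ∈ Icc (((lb : ℤ) - (l : ℤ)).natAbs + 1) (min N (lb + l)),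
            ((l : ℝ) ^ 8 * (lb : ℝ) ^ 4 + (l : ℝ) ^ 6 * (lb : ℝ) ^ 6) /
              ((l : ℝ) ^ 4 * ((l : ℝ) + 1) ^ 4) ≤
      8 * N ^ 2 * (lb : ℝ) ^ 5 := by
  have hcard : (#((Icc 1 (N - 1)).filter
      (fun l : ℕ => 2 * (lb : ℝ) * (Real.log lb + 1) ≤ (l : ℝ))) : ℝ) ≤ N := by
    exact_mod_cast (card_filter_le _ _).trans (by rw [Nat.card_Icc]; omega)
  calc _ ≤ #((Icc 1 (N - 1)).filter
          (fun l : ℕ => 2 * (lb : ℝ) * (Real.log lb + 1) ≤ (l : ℝ))) • (8 * N * (lb : ℝ) ^ 5) := by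
        refine sum_le_card_nsmul _ _ _ fun l hl => ?_
        simp only [mem_filter, mem_Icc] at hl
        exact A_inner_sum_le (two_mul_le_of_log_cutoff (by exact_mod_cast hlb) hl.2) (by omega)
    _ ≤ N * (8 * N * (lb : ℝ) ^ 5) := by rw [nsmul_eq_mul]; gcongr
    _ = 8 * N ^ 2 * (lb : ℝ) ^ 5 := by ring

lemma two_mul_add_one_mul_rpow_neg_le {κ x : ℝ} (hκ : 0 ≤ κ) (hx : 1 ≤ x) :
    (2 * x + 1) * (x * (x + 1)) ^ (-κ) ≤ 3 * x ^ (1 - 2 * κ) := by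
  have hx0 : 0 < x := by linarith
  have hpow : (x * (x + 1)) ^ (-κ) ≤ x ^ (-(2 * κ)) := by
    rw [show -(2 * κ) = 2 * -κ by ring, Real.rpow_mul hx0.le, Real.rpow_two]
    exact Real.rpow_le_rpow_of_nonpos (by positivity) (by nlinarith) (by linarith)
  calc (2 * x + 1) * (x * (x + 1)) ^ (-κ) ≤ 3 * x * x ^ (-(2 * κ)) := by
        gcongr; linarith
    _ = 3 * x ^ (1 - 2 * κ) := by
        rw [sub_eq_add_neg, Real.rpow_add hx0, Real.rpow_one]; ring

lemma sum_Icc_rpow_le (s : ℝ) (N : ℕ) :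
    ∑ lb ∈ Icc 1 (N - 1), (lb : ℝ) ^ s ≤ N * (N : ℝ) ^ max s 0 := by
  calc _ ≤ #(Icc 1 (N - 1)) • (N : ℝ) ^ max s 0 := by
        refine sum_le_card_nsmul _ _ _ fun lb hlb => ?_
        rw [mem_Icc] at hlb
        have h1 : (1 : ℝ) ≤ lb := by exact_mod_cast hlb.1
        calc (lb : ℝ) ^ s ≤ (lb : ℝ) ^ max s 0 :=
              Real.rpow_le_rpow_of_exponent_le h1 (le_max_left _ _)
          _ ≤ (N : ℝ) ^ max s 0 := by gcongr; exact_mod_cast hlb.2.trans (Nat.sub_le N 1)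
    _ ≤ N * (N : ℝ) ^ max s 0 := by
        rw [nsmul_eq_mul]; gcongr; exact_mod_cast (by rw [Nat.card_Icc]; omega)

lemma A_le_sum {κ : ℝ} (hκ : 0 ≤ κ) (N : ℕ) :
    A κ N ≤ 24 / (N : ℝ) ^ 2 * ∑ lb ∈ Icc 1 (N - 1), (lb : ℝ) ^ (6 - 2 * κ) := by
  rcases N.eq_zero_or_pos with rfl | hN
  · simp [A]
  unfold A
  calc _ ≤ 1 / (N : ℝ) ^ 4 * ∑ lb ∈ Icc 1 (N - 1), 24 * (N : ℝ) ^ 2 * (lb : ℝ) ^ (6 - 2 * κ) := by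
        refine mul_le_mul_of_nonneg_left (sum_le_sum fun lb hlb => ?_) (by positivity)
        have hlb1 : 1 ≤ lb := (mem_Icc.1 hlb).1
        calc _ ≤ 3 * (lb : ℝ) ^ (1 - 2 * κ) * (8 * N ^ 2 * (lb : ℝ) ^ 5) :=
              mul_le_mul (two_mul_add_one_mul_rpow_neg_le hκ (by exact_mod_cast hlb1))
                (A_middle_sum_le hlb1) (by positivity) (by positivity)
          _ = 24 * (N : ℝ) ^ 2 * (lb : ℝ) ^ (6 - 2 * κ) := by
              rw [show 6 - 2 * κ = (1 - 2 * κ) + (5 : ℕ) by push_cast; ring,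
                Real.rpow_add (by positivity), Real.rpow_natCast]
              ring
    _ = _ := by
        rw [← mul_sum]; field_simp

lemma A_le_rpow {κ : ℝ} (hκ : 0 ≤ κ) {N : ℕ} (hN : 1 ≤ N) :
    A κ N ≤ 24 * (N : ℝ) ^ (max (6 - 2 * κ) 0 - 1) := by
  have hN0 : (N : ℝ) ≠ 0 := by positivity
  calc A κ N ≤ 24 / (N : ℝ) ^ 2 * ∑ lb ∈ Icc 1 (N - 1), (lb : ℝ) ^ (6 - 2 * κ) := A_le_sum hκ N
    _ ≤ 24 / (N : ℝ) ^ 2 * (N * (N : ℝ) ^ max (6 - 2 * κ) 0) := by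
        gcongr; exact sum_Icc_rpow_le _ N
    _ = 24 * (N : ℝ) ^ (max (6 - 2 * κ) 0 - 1) := by
        rw [Real.rpow_sub_one hN0]; field_simp

/-- For every `κ > 5/2`, `A_N(κ) → 0` as `N → ∞`. -/
theorem A_tendsto_zero (κ : ℝ) (hκ : 5 / 2 < κ) :
    Tendsto (fun N : ℕ => A κ N) atTop (nhds 0) := by
  set a := max (6 - 2 * κ) 0
  have ha : a < 1 := max_lt (by linarith) one_pos
  have hlim : Tendsto (fun N : ℕ => 24 * (N : ℝ) ^ (a - 1)) atTop (nhds 0) := by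
    have := ((tendsto_rpow_neg_atTop (by linarith : 0 < 1 - a)).comp
      tendsto_natCast_atTop_atTop).const_mul 24
    simpa [Function.comp_def] using this
  refine squeeze_zero' (Eventually.of_forall (A_nonneg κ)) ?_ hlim
  filter_upwards [eventually_ge_atTop 1] with N hN using A_le_rpow (by linarith) hN
end

section
/- There exists a constant C > 0 such that for every odd integer N ≥ 3 and every n ∈ Λ_N*, it holds Σ_{k ∈ Λ_N*, k ≠ n} [ (|n-k|² + |n|²)/|n-k| + (|n-k|³ + |n|³)/|n-k|² ] ≤ C·( N³ + |n|²·N·log N + |n|³·log N ), where |·| denotes the Euclidean norm on ℤ² ⊂ ℝ². -/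
/-!
Measure `n - k` in the sup norm `m = ‖n - k‖_∞`, which lies in `[1, N - 1]` and is comparable
to the Euclidean norm (`m ≤ |n - k| ≤ 2m`). Each summand is then at most
`4m + |n|²/m + |n|³/m²`, and at most `8m` lattice points have sup norm `m`, so the sum is at most
`Σ_{m=1}^{N-1} (32 m² + 8|n|² + 8|n|³/m) ≤ 32 N³ + 8|n|² N + 8|n|³ (1 + log N)`.
-/

/-- The Euclidean norm of a lattice point `n ∈ ℤ² ⊂ ℝ²`. -/
noncomputable def enorm2 (n : ℤ × ℤ) : ℝ :=
  Real.sqrt ((n.1 : ℝ) ^ 2 + (n.2 : ℝ) ^ 2)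

/-- The nonzero modes `Λ_N* = {n ∈ ℤ² \ {0} : |n₁| ≤ (N-1)/2, |n₂| ≤ (N-1)/2}`. -/
noncomputable def Lam (N : ℕ) : Finset (ℤ × ℤ) :=
  ((Finset.Icc (-(((N : ℤ) - 1) / 2)) (((N : ℤ) - 1) / 2)) ×ˢ
    (Finset.Icc (-(((N : ℤ) - 1) / 2)) (((N : ℤ) - 1) / 2))).erase (0, 0)

open Finset

def supNorm (j : ℤ × ℤ) : ℕ := max j.1.natAbs j.2.natAbs

lemma mem_box_supNorm (j : ℤ × ℤ) : j ∈ box (supNorm j) := Int.mem_box.mpr rfl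

lemma supNorm_pos {j : ℤ × ℤ} (hj : j ≠ 0) : 0 < supNorm j :=
  Nat.pos_of_ne_zero fun h => hj ((eq_zero_iff_eq_zero_of_mem_box (mem_box_supNorm j)).mpr h)

lemma supNorm_le_enorm2 (j : ℤ × ℤ) : (supNorm j : ℝ) ≤ enorm2 j := by
  refine Real.le_sqrt_of_sq_le ?_
  rcases max_choice j.1.natAbs j.2.natAbs with h | h <;>
    simp only [supNorm, h, Nat.cast_natAbs, Int.cast_abs, sq_abs] <;> nlinarith

lemma enorm2_le_two_mul_supNorm (j : ℤ × ℤ) : enorm2 j ≤ 2 * supNorm j := by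
  have h1 : |(j.1 : ℝ)| ≤ supNorm j := by simp [supNorm]
  have h2 : |(j.2 : ℝ)| ≤ supNorm j := by simp [supNorm]
  refine Real.sqrt_le_iff.mpr ⟨by positivity, ?_⟩
  rw [← sq_abs (j.1 : ℝ), ← sq_abs (j.2 : ℝ)]
  nlinarith [abs_nonneg (j.1 : ℝ), abs_nonneg (j.2 : ℝ)]

lemma supNorm_sub_le_of_mem_Lam {N : ℕ} {n k : ℤ × ℤ} (hn : n ∈ Lam N) (hk : k ∈ Lam N) :
    supNorm (n - k) ≤ N - 1 := by
  simp only [Lam, mem_erase, mem_product, mem_Icc] at hn hk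
  simp only [supNorm, Prod.fst_sub, Prod.snd_sub, max_le_iff]
  omega

lemma sum_supNorm_le_sum_shells {S : Finset (ℤ × ℤ)} {n : ℤ × ℤ} {M : ℕ} {g : ℕ → ℝ}
    (hg : ∀ m, 0 ≤ g m) (hS : ∀ k ∈ S, supNorm (n - k) ∈ Icc 1 M) :
    ∑ k ∈ S, g (supNorm (n - k)) ≤ ∑ m ∈ Icc 1 M, 8 * (m : ℝ) * g m := by
  rw [← sum_fiberwise_of_maps_to hS]
  refine sum_le_sum fun m hm => ?_
  have hcard : #{k ∈ S | supNorm (n - k) = m} ≤ 8 * m := by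
    rw [← Int.card_box (by simp at hm; omega)]
    refine card_le_card_of_injOn (n - ·) (fun k hk => ?_)
      (fun _ _ _ _ h => sub_right_injective h)
    simpa [supNorm] using (mem_filter.mp hk).2
  calc ∑ k ∈ S with supNorm (n - k) = m, g (supNorm (n - k))
      = #{k ∈ S | supNorm (n - k) = m} * g m := by
        rw [sum_congr rfl fun k hk => by rw [(mem_filter.mp hk).2], sum_const, nsmul_eq_mul]
    _ ≤ 8 * (m : ℝ) * g m := by gcongr; exacts [hg m, mod_cast hcard]

noncomputable def radialBound (a : ℝ) (m : ℕ) : ℝ := 4 * m + a ^ 2 / m + a ^ 3 / m ^ 2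

lemma radialBound_nonneg {a : ℝ} (ha : 0 ≤ a) (m : ℕ) : 0 ≤ radialBound a m :=
  add_nonneg (by positivity) (div_nonneg (pow_nonneg ha 3) (by positivity))

lemma summand_le_radialBound {a : ℝ} (ha : 0 ≤ a) {j : ℤ × ℤ} (hj : j ≠ 0) :
    (enorm2 j ^ 2 + a ^ 2) / enorm2 j + (enorm2 j ^ 3 + a ^ 3) / enorm2 j ^ 2 ≤
      radialBound a (supNorm j) := by
  set e := enorm2 j
  set m : ℝ := (supNorm j : ℝ)
  have hm : 0 < m := by simpa [m] using supNorm_pos hj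
  have hme : m ≤ e := supNorm_le_enorm2 j
  have he : e ≤ 2 * m := enorm2_le_two_mul_supNorm j
  have he0 : 0 < e := hm.trans_le hme
  have h2 : a ^ 2 / e ≤ a ^ 2 / m := by gcongr
  have h3 : a ^ 3 / e ^ 2 ≤ a ^ 3 / m ^ 2 := by gcongr
  calc (e ^ 2 + a ^ 2) / e + (e ^ 3 + a ^ 3) / e ^ 2 = 2 * e + a ^ 2 / e + a ^ 3 / e ^ 2 := by
        field_simp; ring
    _ ≤ radialBound a (supNorm j) := by unfold radialBound; linarith

lemma sum_shells_radialBound_le {a : ℝ} (ha : 0 ≤ a) (M : ℕ) :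
    ∑ m ∈ Icc 1 M, 8 * (m : ℝ) * radialBound a m ≤
      32 * (M : ℝ) ^ 3 + 8 * a ^ 2 * M + 8 * a ^ 3 * (1 + Real.log M) := by
  have hterm : ∀ m ∈ Icc 1 M, 8 * (m : ℝ) * radialBound a m ≤
      (32 * (M : ℝ) ^ 2 + 8 * a ^ 2) + 8 * a ^ 3 * (m : ℝ)⁻¹ := by
    intro m hm
    have hm1 : (1 : ℝ) ≤ m := by exact_mod_cast (mem_Icc.mp hm).1
    have hmM : (m : ℝ) ≤ M := by exact_mod_cast (mem_Icc.mp hm).2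
    have : 8 * (m : ℝ) * radialBound a m =
        32 * (m : ℝ) ^ 2 + 8 * a ^ 2 + 8 * a ^ 3 * (m : ℝ)⁻¹ := by
      unfold radialBound; field_simp; ring
    rw [this]; gcongr
  have hharmonic : ∑ m ∈ Icc 1 M, (m : ℝ)⁻¹ ≤ 1 + Real.log M := by
    simpa [harmonic_eq_sum_Icc] using harmonic_le_one_add_log M
  calc ∑ m ∈ Icc 1 M, 8 * (m : ℝ) * radialBound a m
      ≤ ∑ m ∈ Icc 1 M, ((32 * (M : ℝ) ^ 2 + 8 * a ^ 2) + 8 * a ^ 3 * (m : ℝ)⁻¹) :=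
        sum_le_sum hterm
    _ = M * (32 * (M : ℝ) ^ 2 + 8 * a ^ 2) + 8 * a ^ 3 * ∑ m ∈ Icc 1 M, (m : ℝ)⁻¹ := by
        rw [sum_add_distrib, sum_const, Nat.card_Icc, nsmul_eq_mul, mul_sum]; simp
    _ ≤ 32 * (M : ℝ) ^ 3 + 8 * a ^ 2 * M + 8 * a ^ 3 * (1 + Real.log M) := by
        linarith [mul_le_mul_of_nonneg_left hharmonic (by positivity : (0 : ℝ) ≤ 8 * a ^ 3)]

lemma one_le_log_of_three_le {N : ℕ} (hN : 3 ≤ N) : 1 ≤ Real.log N := by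
  rw [Real.le_log_iff_exp_le (by positivity)]
  have : (3 : ℝ) ≤ N := by exact_mod_cast hN
  linarith [Real.exp_one_lt_d9]

/-- Lattice-sum estimate: there is `C > 0` such that for every odd `N ≥ 3` and every
`n ∈ Λ_N*`,
`Σ_{k ∈ Λ_N*, k ≠ n} [(|n-k|²+|n|²)/|n-k| + (|n-k|³+|n|³)/|n-k|²]
  ≤ C(N³ + |n|²·N·log N + |n|³·log N)`. -/
theorem lattice_sum_estimate : ∃ C : ℝ, 0 < C ∧
    ∀ N : ℕ, Odd N → 3 ≤ N → ∀ n ∈ Lam N,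
    ∑ k ∈ (Lam N).erase n,
        ((enorm2 (n - k) ^ 2 + enorm2 n ^ 2) / enorm2 (n - k) +
          (enorm2 (n - k) ^ 3 + enorm2 n ^ 3) / enorm2 (n - k) ^ 2) ≤
      C * ((N : ℝ) ^ 3 + enorm2 n ^ 2 * (N : ℝ) * Real.log N +
        enorm2 n ^ 3 * Real.log N) := by
  refine ⟨32, by norm_num, fun N _ hN n hn => ?_⟩
  set a := enorm2 n
  have ha : 0 ≤ a := Real.sqrt_nonneg _
  have hsub : ∀ k ∈ (Lam N).erase n, n - k ≠ 0 := fun k hk =>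
    sub_ne_zero.mpr (ne_of_mem_erase hk).symm
  have hshells : ∀ k ∈ (Lam N).erase n, supNorm (n - k) ∈ Icc 1 (N - 1) := fun k hk =>
    mem_Icc.mpr ⟨supNorm_pos (hsub k hk), supNorm_sub_le_of_mem_Lam hn (mem_of_mem_erase hk)⟩
  have hM : ((N - 1 : ℕ) : ℝ) ≤ N := by exact_mod_cast N.sub_le 1
  have hlogM : Real.log (N - 1 : ℕ) ≤ Real.log N :=
    Real.log_le_log (by norm_cast; omega) hM
  have hlog := one_le_log_of_three_le hN
  calc _ ≤ ∑ k ∈ (Lam N).erase n, radialBound a (supNorm (n - k)) :=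
        sum_le_sum fun k hk => summand_le_radialBound ha (hsub k hk)
    _ ≤ ∑ m ∈ Icc 1 (N - 1), 8 * (m : ℝ) * radialBound a m :=
        sum_supNorm_le_sum_shells (radialBound_nonneg ha) hshells
    _ ≤ 32 * ((N - 1 : ℕ) : ℝ) ^ 3 + 8 * a ^ 2 * (N - 1 : ℕ) +
          8 * a ^ 3 * (1 + Real.log (N - 1 : ℕ)) :=
        sum_shells_radialBound_le ha _
    _ ≤ 32 * ((N : ℝ) ^ 3 + a ^ 2 * N * Real.log N + a ^ 3 * Real.log N) := by
        have h1 : ((N - 1 : ℕ) : ℝ) ^ 3 ≤ (N : ℝ) ^ 3 := by gcongr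
        have h2 : a ^ 2 * (N - 1 : ℕ) ≤ a ^ 2 * N * Real.log N := by
          rw [mul_assoc]; gcongr; nlinarith
        have h3 : a ^ 3 * (1 + Real.log (N - 1 : ℕ)) ≤ 2 * (a ^ 3 * Real.log N) := by
          rw [two_mul, ← mul_add]; gcongr
        nlinarith [pow_nonneg ha 3, sq_nonneg a]
end
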